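/- arXiv:2309.13432 — 5 statements merged into one kernel-verified Lean document; each statement's English description precedes it below -/
import Mathlib

section
/- Let x₁,…,xₙ be positive reals (n ≥ 2), not all equal, and let a ≥ 1 with n - a + 1 > 0. Let δ > 0 and index i be such that K := (∑_j x_j - δ)/(n - a + 1) - x_i > 0. Then the limit as λ → ∞ of e^{-λ(∑_j x_j - δ)/(n-a+1)} / ( -∑_{i=1}^n ln(1 - e^{-λ x_i}) ) equals 0. -/
/-!
Since `y ≤ -log (1 - y)` for `y < 1` and every summand `-log (1 - e^{-λ x_k})` is nonnegative,
the denominator is at least `e^{-λ x_i}`. The quotient is therefore squeezed between `0` and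
`e^{-λ (S - x_i)}`, where `S = (∑ x_j - δ)/(n - a + 1)`, and this tends to `0` because `S > x_i`.
-/

open Real Filter

lemma Real.le_neg_log_one_sub {y : ℝ} (hy : y < 1) : y ≤ -log (1 - y) := by
  linarith [log_le_sub_one_of_pos (sub_pos.mpr hy)]

lemma Real.exp_neg_mul_le_neg_sum_log_one_sub_exp_neg {ι : Type*} [Fintype ι] {x : ι → ℝ}
    (hx : ∀ k, 0 < x k) {l : ℝ} (hl : 0 < l) (i : ι) :
    exp (-(l * x i)) ≤ -∑ k, log (1 - exp (-(l * x k))) := by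
  have hterm : ∀ k, exp (-(l * x k)) ≤ -log (1 - exp (-(l * x k))) := fun k =>
    le_neg_log_one_sub (Real.exp_lt_one_iff.mpr (neg_neg_of_pos (mul_pos hl (hx k))))
  rw [← Finset.sum_neg_distrib]
  calc exp (-(l * x i)) ≤ -log (1 - exp (-(l * x i))) := hterm i
    _ ≤ ∑ k, -log (1 - exp (-(l * x k))) :=
      Finset.single_le_sum (fun k _ => (exp_pos _).le.trans (hterm k)) (Finset.mem_univ i)

lemma Real.tendsto_exp_neg_mul_div_neg_sum_log_one_sub_exp_neg {ι : Type*} [Fintype ι]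
    {x : ι → ℝ} (hx : ∀ k, 0 < x k) {S : ℝ} {i : ι} (hS : x i < S) :
    Tendsto (fun l : ℝ => exp (-(l * S)) / (-∑ k, log (1 - exp (-(l * x k)))))
      atTop (nhds 0) := by
  have hbound : Tendsto (fun l : ℝ => exp (-(l * (S - x i)))) atTop (nhds 0) :=
    tendsto_exp_neg_atTop_nhds_zero.comp
      (tendsto_id.atTop_mul_const (sub_pos.mpr hS))
  refine squeeze_zero' ?_ ?_ hbound
  · filter_upwards [eventually_gt_atTop 0] with l hl
    exact div_nonneg (exp_pos _).le
      ((exp_pos _).le.trans (exp_neg_mul_le_neg_sum_log_one_sub_exp_neg hx hl i))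
  · filter_upwards [eventually_gt_atTop 0] with l hl
    calc exp (-(l * S)) / (-∑ k, log (1 - exp (-(l * x k))))
        ≤ exp (-(l * S)) / exp (-(l * x i)) :=
          div_le_div_of_nonneg_left (exp_pos _).le (exp_pos _)
            (exp_neg_mul_le_neg_sum_log_one_sub_exp_neg hx hl i)
      _ = exp (-(l * (S - x i))) := by rw [← exp_sub]; ring_nf

theorem stmt9_general (n : ℕ) (x : Fin n → ℝ) (hx : ∀ i, 0 < x i) (a : ℝ) (δ : ℝ) (i : Fin n)
    (hK : (∑ j, x j - δ) / ((n : ℝ) - a + 1) - x i > 0) :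
    Tendsto (fun l : ℝ =>
        Real.exp (-(l * ((∑ j, x j - δ) / ((n : ℝ) - a + 1)))) /
          (-∑ k, Real.log (1 - Real.exp (-(l * x k)))))
      atTop (nhds 0) :=
  tendsto_exp_neg_mul_div_neg_sum_log_one_sub_exp_neg hx (sub_pos.mp hK)

theorem stmt9 (n : ℕ) (hn : 2 ≤ n) (x : Fin n → ℝ) (hx : ∀ i, 0 < x i)
    (hne : ∃ i j, x i ≠ x j) (a : ℝ) (ha : 1 ≤ a) (hna : (n : ℝ) - a + 1 > 0)
    (δ : ℝ) (hδ : 0 < δ) (i : Fin n)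
    (hK : (∑ j, x j - δ) / ((n : ℝ) - a + 1) - x i > 0) :
    Tendsto (fun l : ℝ =>
        Real.exp (-(l * ((∑ j, x j - δ) / ((n : ℝ) - a + 1)))) /
          (-∑ k, Real.log (1 - Real.exp (-(l * x k)))))
      atTop (nhds 0) :=
  stmt9_general n x hx a δ i hK
end

section
/- Let x₁,…,xₙ be positive reals, n ≥ 2, not all equal, a ≥ 1, b ≤ 1 reals with n > a - 1, and let n > a when b = 1. Then the function π(λ) = λ^{n-b} e^{-λ ∑ x_i} ∏_{i=1}^n (1 - e^{-λ x_i})^{-1} · ( -∑_{i=1}^n ln(1 - e^{-λ x_i}) )^{-(n-a+1)} is Lebesgue integrable on (0, ∞). -/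
open Real MeasureTheory Set

set_option maxHeartbeats 2000000 in
theorem stmt12 (n : ℕ) (hn : 2 ≤ n) (x : Fin n → ℝ) (hx : ∀ i, 0 < x i)
    (hne : ∃ i j, x i ≠ x j) (a b : ℝ) (ha : 1 ≤ a) (hb : b ≤ 1)
    (hna : (n : ℝ) > a - 1) (hb1 : b = 1 → (n : ℝ) > a) :
    IntegrableOn (fun l : ℝ =>
        l ^ ((n : ℝ) - b) * Real.exp (-(l * ∑ i, x i)) *
          (∏ i, (1 - Real.exp (-(l * x i)))⁻¹) *
          (-∑ i, Real.log (1 - Real.exp (-(l * x i)))) ^ (-((n : ℝ) - a + 1)))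
      (Ioi 0) := by
  have hne' : Nonempty (Fin n) := ⟨⟨0, by omega⟩⟩
  set f : ℝ → ℝ := fun l =>
        l ^ ((n : ℝ) - b) * Real.exp (-(l * ∑ i, x i)) *
          (∏ i, (1 - Real.exp (-(l * x i)))⁻¹) *
          (-∑ i, Real.log (1 - Real.exp (-(l * x i)))) ^ (-((n : ℝ) - a + 1)) with hf
  set p : ℝ := (n : ℝ) - a + 1 with hpdef
  have hp0 : 0 < p := by simp only [hpdef]; linarith
  have hpn : p ≤ (n : ℝ) := by simp only [hpdef]; linarith
  set S : ℝ := ∑ i, x i with hSdef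
  set m : ℝ := Finset.univ.inf' Finset.univ_nonempty x with hmdef
  have hmle : ∀ i, m ≤ x i := fun i => Finset.inf'_le x (Finset.mem_univ i)
  obtain ⟨i₀, -, hi₀⟩ := Finset.exists_mem_eq_inf' (Finset.univ_nonempty (α := Fin n)) x
  have hmi₀ : m = x i₀ := by rw [hmdef, hi₀]
  have hm0 : 0 < m := by rw [hmi₀]; exact hx i₀
  -- S > n * m
  have hnmS : (n : ℝ) * m < S := by
    have hj : ∃ j, m < x j := by
      by_contra h
      push_neg at h
      obtain ⟨i, j, hij⟩ := hne
      exact hij ((le_antisymm (h i) (hmle i)).trans (le_antisymm (h j) (hmle j)).symm)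
    obtain ⟨j, hj⟩ := hj
    calc (n : ℝ) * m = ∑ _i : Fin n, m := by
          rw [Finset.sum_const, Finset.card_univ, Fintype.card_fin, nsmul_eq_mul]
      _ < S := Finset.sum_lt_sum (fun i _ => hmle i) ⟨j, Finset.mem_univ j, hj⟩
  set ε : ℝ := S - p * m with hεdef
  have hε : 0 < ε := by
    have : p * m ≤ (n : ℝ) * m := mul_le_mul_of_nonneg_right hpn hm0.le
    simp only [hεdef]; linarith
  -- basic positivity
  have h1 : ∀ l : ℝ, 0 < l → ∀ i, 0 < 1 - Real.exp (-(l * x i)) := by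
    intro l hl i
    have : Real.exp (-(l * x i)) < 1 := Real.exp_lt_one_iff.mpr (neg_lt_zero.mpr (mul_pos hl (hx i)))
    linarith
  have h1lt : ∀ l : ℝ, 0 < l → ∀ i, 1 - Real.exp (-(l * x i)) < 1 := by
    intro l hl i
    have := Real.exp_pos (-(l * x i)); linarith
  have hg : ∀ l : ℝ, 0 < l → 0 < -∑ i, Real.log (1 - Real.exp (-(l * x i))) := by
    intro l hl
    rw [neg_pos]
    calc ∑ i, Real.log (1 - Real.exp (-(l * x i)))
        < ∑ _i : Fin n, (0:ℝ) := by
          apply Finset.sum_lt_sum_of_nonempty Finset.univ_nonempty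
          intro i _
          exact Real.log_neg (h1 l hl i) (h1lt l hl i)
      _ = 0 := Finset.sum_const_zero
  -- continuity on Ioi 0
  have hcont : ContinuousOn f (Ioi 0) := by
    apply ContinuousOn.mul
    apply ContinuousOn.mul
    apply ContinuousOn.mul
    · exact ContinuousOn.rpow_const continuousOn_id (fun l hl => Or.inl (ne_of_gt hl))
    · exact (Real.continuous_exp.comp (by continuity)).continuousOn
    · apply continuousOn_finset_prod
      intro i _
      exact ContinuousOn.inv₀ (by fun_prop) (fun l hl => ne_of_gt (h1 l hl i))
    · apply ContinuousOn.rpow_const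
      · apply ContinuousOn.neg
        apply continuousOn_finset_sum
        intro i _
        exact ContinuousOn.log (by fun_prop) (fun l hl => ne_of_gt (h1 l hl i))
      · exact fun l hl => Or.inl (ne_of_gt (hg l hl))
  have hfnn : ∀ l ∈ Ioi (0:ℝ), 0 ≤ f l := by
    intro l hl
    have := h1 l hl
    have := hg l hl
    rw [hf]
    apply mul_nonneg (mul_nonneg (mul_nonneg ?_ (Real.exp_nonneg _)) ?_) ?_
    · exact Real.rpow_nonneg (le_of_lt hl) _
    · exact Finset.prod_nonneg fun i _ => inv_nonneg.mpr (h1 l hl i).le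
    · exact Real.rpow_nonneg (hg l hl).le _
  -- split points
  set δ : ℝ := (2 * m)⁻¹ with hδdef
  have hδ : 0 < δ := by positivity
  have hδm : δ * m = 1/2 := by rw [hδdef]; field_simp
  set R : ℝ := max δ (Real.log 2 / m) with hRdef
  have hδR : δ ≤ R := le_max_left _ _
  have hR0 : 0 < R := lt_of_lt_of_le hδ hδR
  have hsplit : Ioi (0:ℝ) = Ioc 0 δ ∪ (Ioc δ R ∪ Ioi R) := by
    rw [Ioc_union_Ioi_eq_Ioi hδR, Ioc_union_Ioi_eq_Ioi hδ.le]
  rw [hsplit]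
  apply IntegrableOn.union
  · -- head
    have hmeas : AEStronglyMeasurable f (volume.restrict (Ioc 0 δ)) :=
      (hcont.mono Ioc_subset_Ioi_self).aestronglyMeasurable measurableSet_Ioc
    have hP0 : 0 < ∏ i, x i := Finset.prod_pos (fun i _ => hx i)
    set K : ℝ := (∏ i, x i)⁻¹ with hKdef
    have hK0 : 0 < K := inv_pos.mpr hP0
    -- the single-term lower bound for g
    have hgsingle : ∀ l : ℝ, 0 < l →
        -Real.log (1 - Real.exp (-(l * m))) ≤ -∑ i, Real.log (1 - Real.exp (-(l * x i))) := by
      intro l hl0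
      have hterm : ∀ i, (0:ℝ) ≤ -Real.log (1 - Real.exp (-(l * x i))) := by
        intro i
        rw [neg_nonneg]
        exact Real.log_nonpos (h1 l hl0 i).le (by have := Real.exp_pos (-(l * x i)); linarith)
      have h2 : -Real.log (1 - Real.exp (-(l * x i₀))) ≤
          ∑ i, -Real.log (1 - Real.exp (-(l * x i))) :=
        Finset.single_le_sum (fun i _ => hterm i) (Finset.mem_univ i₀)
      rw [Finset.sum_neg_distrib] at h2
      rw [hmi₀]
      exact h2
    -- common head bound: f l ≤ K * l ^ (-b) * g l ^ (-p)
    have hhead : ∀ l ∈ Ioc (0:ℝ) δ, f l ≤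
        K * l ^ (-b) * (-∑ i, Real.log (1 - Real.exp (-(l * x i)))) ^ (-p) := by
      intro l hl
      have hl0 : 0 < l := hl.1
      have hfac : ∀ i, (1 - Real.exp (-(l * x i)))⁻¹ ≤ (l * x i * Real.exp (-(l * x i)))⁻¹ := by
        intro i
        have ht : 0 < l * x i := mul_pos hl0 (hx i)
        have key : l * x i * Real.exp (-(l * x i)) ≤ 1 - Real.exp (-(l * x i)) := by
          have h := Real.add_one_le_exp (l * x i)
          have h2 := mul_le_mul_of_nonneg_right h (Real.exp_nonneg (-(l * x i)))
          rw [← Real.exp_add] at h2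
          simp only [add_neg_cancel, Real.exp_zero] at h2
          nlinarith [Real.exp_pos (-(l * x i))]
        exact inv_anti₀ (by positivity) key
      have hprod : (∏ i, (1 - Real.exp (-(l * x i)))⁻¹) ≤
          (l ^ n * (∏ i, x i) * Real.exp (-(l * S)))⁻¹ := by
        have heq : (∏ i, (l * x i * Real.exp (-(l * x i)))⁻¹) =
            (l ^ n * (∏ i, x i) * Real.exp (-(l * S)))⁻¹ := by
          rw [Finset.prod_inv_distrib]
          congr 1
          rw [Finset.prod_mul_distrib, Finset.prod_mul_distrib, Finset.prod_const,
            Finset.card_univ, Fintype.card_fin, ← Real.exp_sum]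
          congr 1
          rw [Finset.sum_neg_distrib, ← Finset.mul_sum]
        rw [← heq]
        apply Finset.prod_le_prod
        · exact fun i _ => inv_nonneg.mpr (h1 l hl0 i).le
        · exact fun i _ => hfac i
      have hABC : l ^ ((n:ℝ) - b) * Real.exp (-(l * S)) *
          (∏ i, (1 - Real.exp (-(l * x i)))⁻¹) ≤ K * l ^ (-b) := by
        have h3 : l ^ ((n:ℝ) - b) * Real.exp (-(l * S)) *
            (l ^ n * (∏ i, x i) * Real.exp (-(l * S)))⁻¹ = K * l ^ (-b) := by
          have hln : l ^ ((n:ℝ) - b) = l ^ (-b) * l ^ n := by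
            rw [← Real.rpow_natCast l n, ← Real.rpow_add hl0]
            congr 1
            ring
          rw [hln, hKdef]
          have h1' : (l:ℝ) ^ n ≠ 0 := by positivity
          have h2' : (∏ i, x i) ≠ 0 := ne_of_gt hP0
          have h3' : Real.exp (-(l * S)) ≠ 0 := Real.exp_ne_zero _
          field_simp
        calc l ^ ((n:ℝ) - b) * Real.exp (-(l * S)) * (∏ i, (1 - Real.exp (-(l * x i)))⁻¹)
            ≤ l ^ ((n:ℝ) - b) * Real.exp (-(l * S)) *
              (l ^ n * (∏ i, x i) * Real.exp (-(l * S)))⁻¹ := by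
              apply mul_le_mul_of_nonneg_left hprod
              exact mul_nonneg (Real.rpow_nonneg hl0.le _) (Real.exp_nonneg _)
          _ = K * l ^ (-b) := h3
      simp only [hf]
      exact mul_le_mul_of_nonneg_right hABC (Real.rpow_nonneg (hg l hl0).le _)
    rcases eq_or_lt_of_le hb with hbeq | hblt
    · -- b = 1
      have hp1 : 1 < p := by
        have := hb1 hbeq
        simp only [hpdef]; linarith
      have hu : ∀ l : ℝ, l ∈ Ioc 0 δ → 0 < -Real.log (l * m) := by
        intro l hl
        rw [neg_pos]
        apply Real.log_neg (mul_pos hl.1 hm0)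
        have : l * m ≤ 1/2 := by
          rw [← hδm]; exact mul_le_mul_of_nonneg_right hl.2 hm0.le
        linarith
      have key : IntegrableOn (fun l : ℝ => l⁻¹ * (-Real.log (l * m)) ^ (-p)) (Ioc 0 δ) := by
        apply intervalIntegral.integrableOn_deriv_of_nonneg
          (g := fun l : ℝ => (p-1)⁻¹ * (-Real.log (l * m)) ^ (1-p))
        · -- continuity on Icc 0 δ
          intro l hl
          rcases eq_or_ne l 0 with rfl | hne0
          · rw [show Icc (0:ℝ) δ = insert 0 (Ioc 0 δ) from (Ioc_insert_left hδ.le).symm,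
              continuousWithinAt_insert_self]
            have hT : Filter.Tendsto (fun l : ℝ => (p-1)⁻¹ * (-Real.log (l * m)) ^ (1-p))
                (nhdsWithin 0 (Ioc 0 δ)) (nhds 0) := by
              have h1 : Filter.Tendsto (fun l : ℝ => l * m) (nhdsWithin 0 (Ioc 0 δ))
                  (nhdsWithin 0 (Ioi 0)) := by
                rw [tendsto_nhdsWithin_iff]
                constructor
                · have h0 := (continuous_id.mul (continuous_const (y := m))).tendsto (0:ℝ)
                  simp only [Pi.mul_def, id, zero_mul] at h0
                  exact h0.mono_left nhdsWithin_le_nhds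
                · filter_upwards [self_mem_nhdsWithin] with l hl
                  exact mul_pos hl.1 hm0
              have h2 := Real.tendsto_log_nhdsGT_zero.comp h1
              have h3 : Filter.Tendsto (fun l : ℝ => -Real.log (l * m))
                  (nhdsWithin 0 (Ioc 0 δ)) Filter.atTop :=
                Filter.tendsto_neg_atBot_atTop.comp h2
              have h4 := (tendsto_rpow_neg_atTop (by linarith : (0:ℝ) < p - 1)).comp h3
              have h5 : Filter.Tendsto (fun l : ℝ => (-Real.log (l * m)) ^ (1 - p))
                  (nhdsWithin 0 (Ioc 0 δ)) (nhds 0) := by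
                rw [show (1:ℝ) - p = -(p-1) by ring]
                exact h4
              have h6 := Filter.Tendsto.const_mul (a := 0) ((p-1)⁻¹) h5
              simpa using h6
            have hF0 : (p-1)⁻¹ * (-Real.log ((0:ℝ) * m)) ^ ((1:ℝ)-p) = 0 := by
              rw [zero_mul, Real.log_zero, neg_zero,
                Real.zero_rpow (ne_of_lt (by linarith : (1:ℝ)-p < 0)), mul_zero]
            show Filter.Tendsto (fun l : ℝ => (p-1)⁻¹ * (-Real.log (l * m)) ^ (1-p))
              (nhdsWithin 0 (Ioc 0 δ)) (nhds ((p-1)⁻¹ * (-Real.log ((0:ℝ) * m)) ^ ((1:ℝ)-p)))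
            rw [hF0]
            exact hT
          · have hl0 : 0 < l := lt_of_le_of_ne hl.1 (Ne.symm hne0)
            have hu0 : 0 < -Real.log (l * m) := hu l ⟨hl0, hl.2⟩
            apply ContinuousAt.continuousWithinAt
            exact continuousAt_const.mul
              (ContinuousAt.rpow_const
                (((continuousAt_id.mul continuousAt_const).log (mul_pos hl0 hm0).ne').neg)
                (Or.inl (ne_of_gt hu0)))
        · -- derivative
          intro l hl
          have hl0 : 0 < l := hl.1
          have hlm : l * m ≠ 0 := (mul_pos hl0 hm0).ne'
          have hu0 : 0 < -Real.log (l * m) := hu l ⟨hl.1, hl.2.le⟩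
          have h1' : HasDerivAt (fun y : ℝ => y * m) (1 * m) l := (hasDerivAt_id l).mul_const m
          have h2' : HasDerivAt (fun y : ℝ => Real.log (y * m)) (1 * m / (l * m)) l := h1'.log hlm
          have h3' : HasDerivAt (fun y : ℝ => -Real.log (y * m)) (-(1 * m / (l * m))) l := h2'.neg
          have h4' : HasDerivAt (fun y : ℝ => (-Real.log (y * m)) ^ ((1:ℝ) - p))
              ((-(1 * m / (l * m))) * ((1:ℝ) - p) * (-Real.log (l * m)) ^ ((1:ℝ) - p - 1)) l :=
            h3'.rpow_const (Or.inl (ne_of_gt hu0))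
          have h5' := h4'.const_mul ((p-1)⁻¹)
          refine h5'.congr_deriv ?_
          rw [show (1:ℝ) - p - 1 = -p by ring]
          have hp1' : p - 1 ≠ 0 := ne_of_gt (by linarith)
          field_simp
          ring
        · -- nonneg
          intro l hl
          exact mul_nonneg (inv_nonneg.mpr hl.1.le) (Real.rpow_nonneg (hu l ⟨hl.1, hl.2.le⟩).le _)
      apply Integrable.mono'
        (g := fun l => K * (l⁻¹ * (-Real.log (l * m)) ^ (-p))) (key.const_mul K) hmeas ?_
      rw [ae_restrict_iff' measurableSet_Ioc]
      filter_upwards with l hl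
      have hl0 : 0 < l := hl.1
      rw [Real.norm_eq_abs, abs_of_nonneg (hfnn l hl0)]
      have hu0 := hu l hl
      have hpos : 0 < 1 - Real.exp (-(l * m)) := by
        have := Real.exp_lt_one_iff.mpr (neg_lt_zero.mpr (mul_pos hl0 hm0))
        linarith
      have hg2 : -Real.log (l * m) ≤ -∑ i, Real.log (1 - Real.exp (-(l * x i))) := by
        refine le_trans ?_ (hgsingle l hl0)
        rw [neg_le_neg_iff]
        apply Real.log_le_log hpos
        have := Real.add_one_le_exp (-(l * m))
        linarith
      have hD : (-∑ i, Real.log (1 - Real.exp (-(l * x i)))) ^ (-p) ≤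
          (-Real.log (l * m)) ^ (-p) :=
        Real.rpow_le_rpow_of_nonpos hu0 hg2 (neg_nonpos.mpr hp0.le)
      calc f l ≤ K * l ^ (-b) * (-∑ i, Real.log (1 - Real.exp (-(l * x i)))) ^ (-p) :=
            hhead l hl
        _ ≤ K * l ^ (-b) * (-Real.log (l * m)) ^ (-p) := by
            apply mul_le_mul_of_nonneg_left hD
            exact mul_nonneg hK0.le (Real.rpow_nonneg hl0.le _)
        _ = K * (l⁻¹ * (-Real.log (l * m)) ^ (-p)) := by
            rw [hbeq, Real.rpow_neg_one]
            ring
    · -- b < 1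
      set c₀ : ℝ := -Real.log (1 - Real.exp (-(δ * m))) with hc₀def
      have hδm0 : 0 < δ * m := mul_pos hδ hm0
      have hc₀ : 0 < c₀ := by
        rw [hc₀def, neg_pos]
        apply Real.log_neg
        · have : Real.exp (-(δ * m)) < 1 := Real.exp_lt_one_iff.mpr (neg_lt_zero.mpr hδm0)
          linarith
        · have := Real.exp_pos (-(δ * m)); linarith
      apply Integrable.mono' (g := fun l => (K * c₀ ^ (-p)) * l ^ (-b)) ?_ hmeas ?_
      · have : IntervalIntegrable (fun l : ℝ => l ^ (-b)) volume 0 δ :=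
          intervalIntegral.intervalIntegrable_rpow' (by linarith)
        rw [intervalIntegrable_iff_integrableOn_Ioc_of_le hδ.le] at this
        exact this.const_mul _
      · rw [ae_restrict_iff' measurableSet_Ioc]
        filter_upwards with l hl
        have hl0 : 0 < l := hl.1
        rw [Real.norm_eq_abs, abs_of_nonneg (hfnn l hl0)]
        have hglb : c₀ ≤ -∑ i, Real.log (1 - Real.exp (-(l * x i))) := by
          refine le_trans ?_ (hgsingle l hl0)
          rw [hc₀def, neg_le_neg_iff]
          apply Real.log_le_log
          · have : Real.exp (-(l * m)) < 1 :=
              Real.exp_lt_one_iff.mpr (neg_lt_zero.mpr (mul_pos hl0 hm0))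
            linarith
          · have : Real.exp (-(δ * m)) ≤ Real.exp (-(l * m)) := by
              apply Real.exp_le_exp.mpr
              have := mul_le_mul_of_nonneg_right hl.2 hm0.le
              linarith
            linarith
        have hD : (-∑ i, Real.log (1 - Real.exp (-(l * x i)))) ^ (-p) ≤ c₀ ^ (-p) :=
          Real.rpow_le_rpow_of_nonpos hc₀ hglb (neg_nonpos.mpr hp0.le)
        calc f l ≤ K * l ^ (-b) * (-∑ i, Real.log (1 - Real.exp (-(l * x i)))) ^ (-p) :=
              hhead l hl
          _ ≤ K * l ^ (-b) * c₀ ^ (-p) := by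
              apply mul_le_mul_of_nonneg_left hD
              exact mul_nonneg hK0.le (Real.rpow_nonneg hl0.le _)
          _ = (K * c₀ ^ (-p)) * l ^ (-b) := by ring
  apply IntegrableOn.union
  · -- middle
    exact ((hcont.mono (fun l hl => lt_of_lt_of_le hδ hl.1)).integrableOn_Icc).mono_set Ioc_subset_Icc_self
  · -- tail
    have hmeas : AEStronglyMeasurable f (volume.restrict (Ioi R)) :=
      (hcont.mono (fun l hl => lt_trans hR0 hl)).aestronglyMeasurable measurableSet_Ioi
    apply Integrable.mono'
      (g := fun l => 2^n * (l ^ ((n:ℝ) - b) * Real.exp (-(ε * l)))) ?_ hmeas ?_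
    · have h0 : IntegrableOn (fun l : ℝ => l ^ ((n:ℝ)-b) * Real.exp (-ε * l ^ (1:ℝ))) (Ioi 0) :=
        integrableOn_rpow_mul_exp_neg_mul_rpow (by simp; linarith) zero_lt_one hε
      have h2 : IntegrableOn (fun l : ℝ => l ^ ((n:ℝ)-b) * Real.exp (-(ε * l))) (Ioi 0) := by
        apply h0.congr_fun ?_ measurableSet_Ioi
        intro l hl
        simp only [Real.rpow_one, neg_mul]
      exact ((h2.mono_set (Ioi_subset_Ioi hR0.le)).const_mul _)
    · rw [ae_restrict_iff' measurableSet_Ioi]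
      filter_upwards with l hl
      have hl0 : 0 < l := lt_trans hR0 hl
      rw [Real.norm_eq_abs, abs_of_nonneg (hfnn l hl0)]
      have hlm : Real.log 2 < l * m := by
        have h' : Real.log 2 / m ≤ R := le_max_right _ _
        calc Real.log 2 = (Real.log 2 / m) * m := by field_simp
          _ ≤ R * m := mul_le_mul_of_nonneg_right h' hm0.le
          _ < l * m := by exact mul_lt_mul_of_pos_right hl hm0
      have hexp_half : ∀ i, Real.exp (-(l * x i)) ≤ 1/2 := by
        intro i
        calc Real.exp (-(l * x i)) ≤ Real.exp (-(l * m)) := by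
              apply Real.exp_le_exp.mpr
              have := mul_le_mul_of_nonneg_left (hmle i) hl0.le
              linarith
          _ ≤ 1/2 := by
              rw [show (1:ℝ)/2 = Real.exp (-Real.log 2) by
                rw [Real.exp_neg, Real.exp_log]; norm_num; norm_num]
              exact Real.exp_le_exp.mpr (by linarith)
      have hC : (∏ i, (1 - Real.exp (-(l * x i)))⁻¹) ≤ 2^n := by
        calc (∏ i, (1 - Real.exp (-(l * x i)))⁻¹) ≤ ∏ _i : Fin n, (2:ℝ) := by
              apply Finset.prod_le_prod
              · exact fun i _ => inv_nonneg.mpr (h1 l hl0 i).le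
              · intro i _
                rw [show (2:ℝ) = ((1:ℝ)/2)⁻¹ by norm_num]
                exact inv_anti₀ (by norm_num) (by have := hexp_half i; linarith)
          _ = 2^n := by rw [Finset.prod_const, Finset.card_univ, Fintype.card_fin]
      have hglb : Real.exp (-(l * m)) ≤ -∑ i, Real.log (1 - Real.exp (-(l * x i))) := by
        have hterm : ∀ i, (0:ℝ) ≤ -Real.log (1 - Real.exp (-(l * x i))) := by
          intro i
          rw [neg_nonneg]
          exact Real.log_nonpos (h1 l hl0 i).le (by have := Real.exp_pos (-(l * x i)); linarith)
        have h2 : -Real.log (1 - Real.exp (-(l * x i₀))) ≤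
            ∑ i, -Real.log (1 - Real.exp (-(l * x i))) :=
          Finset.single_le_sum (fun i _ => hterm i) (Finset.mem_univ i₀)
        have h3 : Real.exp (-(l * x i₀)) ≤ -Real.log (1 - Real.exp (-(l * x i₀))) := by
          have := Real.log_le_sub_one_of_pos (h1 l hl0 i₀)
          linarith
        rw [Finset.sum_neg_distrib] at h2
        rw [hmi₀]
        linarith
      have hD : (-∑ i, Real.log (1 - Real.exp (-(l * x i)))) ^ (-p) ≤ Real.exp (l * m * p) := by
        calc (-∑ i, Real.log (1 - Real.exp (-(l * x i)))) ^ (-p)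
            ≤ (Real.exp (-(l * m))) ^ (-p) :=
              Real.rpow_le_rpow_of_nonpos (Real.exp_pos _) hglb (neg_nonpos.mpr hp0.le)
          _ = Real.exp (l * m * p) := by
              rw [Real.rpow_def_of_pos (Real.exp_pos _), Real.log_exp]
              ring_nf
      have hBE : Real.exp (-(l * S)) * Real.exp (l * m * p) = Real.exp (-(ε * l)) := by
        rw [← Real.exp_add]
        congr 1
        rw [hεdef]; ring
      have hAB : 0 ≤ l ^ ((n:ℝ) - b) * Real.exp (-(l * S)) :=
        mul_nonneg (Real.rpow_nonneg hl0.le _) (Real.exp_nonneg _)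
      calc f l ≤ l ^ ((n:ℝ) - b) * Real.exp (-(l * S)) * 2^n * Real.exp (l * m * p) := by
            simp only [hf]
            apply mul_le_mul (mul_le_mul_of_nonneg_left hC hAB) hD
            · exact Real.rpow_nonneg (hg l hl0).le _
            · exact mul_nonneg hAB (by positivity)
        _ = 2^n * (l ^ ((n:ℝ) - b) * Real.exp (-(ε * l))) := by
            rw [← hBE]; ring
end

section
/- Let x₁,…,xₙ be positive reals, n ≥ 2, not all equal, and let a ≥ 1, b ≤ 1 with n > a - 1 (and n > a if b = 1). Then the joint function g(α,λ) = α^{n-a} λ^{n-b} ∏_{i=1}^n (1 - e^{-λ x_i})^{α-1} e^{-λ ∑ x_i} is Lebesgue integrable over (0,∞) × (0,∞); i.e., the posterior of (α, λ) under the prior π(α,λ) ∝ α^{-a} λ^{-b} is proper. -/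
open Real MeasureTheory Set

lemma auxInt {s t : ℝ} (hs : -1 < s) (ht : 0 < t) :
    IntegrableOn (fun x : ℝ => x ^ s * Real.exp (-(t * x))) (Ioi 0) := by
  have h0 : IntegrableOn (fun y : ℝ => y ^ s * Real.exp (-y)) (Ioi 0) := by
    have := Real.GammaIntegral_convergent (by linarith : 0 < s + 1)
    simp only [add_sub_cancel_right] at this
    exact this.congr_fun (fun y _ => mul_comm _ _) measurableSet_Ioi
  have h1 : IntegrableOn (fun x : ℝ => (t*x) ^ s * Real.exp (-(t*x))) (Ioi 0) := by
    have h2 := (integrableOn_Ioi_comp_mul_left_iff (fun y : ℝ => y ^ s * Real.exp (-y)) 0 ht).mpr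
    rw [mul_zero] at h2
    exact h2 h0
  have h2 := h1.const_mul (t ^ (-s))
  refine IntegrableOn.congr_fun h2 (fun x hx => ?_) measurableSet_Ioi
  rw [Real.mul_rpow ht.le (le_of_lt hx), ← mul_assoc, ← mul_assoc, ← Real.rpow_add ht,
    neg_add_cancel, Real.rpow_zero, one_mul]

lemma auxVal {s t : ℝ} (hs : -1 < s) (ht : 0 < t) :
    ∫ x in Ioi (0:ℝ), x ^ s * Real.exp (-(t * x)) = (1/t) ^ (s+1) * Real.Gamma (s+1) := by
  have := Real.integral_rpow_mul_exp_neg_mul_Ioi (by linarith : 0 < s+1) ht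
  simpa [add_sub_cancel_right] using this

lemma auxLog {c m : ℝ} (hc : 1 < c) (hm : 0 < m) :
    IntegrableOn (fun l : ℝ => l⁻¹ * (-Real.log (l*m)) ^ (-c)) (Ioo 0 (Real.exp (-1)/m)) := by
  set g : ℝ → ℝ := fun l => l⁻¹ * (-Real.log (l*m)) ^ (-c) with hg
  set f : ℝ → ℝ := fun u => Real.exp (-u) / m with hf
  have hderiv : ∀ u ∈ Ioi (1:ℝ), HasDerivWithinAt f (-Real.exp (-u) / m) (Ioi 1) u := by
    intro u _
    have h1 : HasDerivAt f (Real.exp (-u) * (-1) / m) u :=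
      ((Real.hasDerivAt_exp (-u)).comp u ((hasDerivAt_id u).neg)).div_const m
    have h2 : Real.exp (-u) * (-1) / m = -Real.exp (-u) / m := by ring
    rw [h2] at h1
    exact h1.hasDerivWithinAt
  have hinj : InjOn f (Ioi 1) := by
    intro u _ v _ h
    have h2 : Real.exp (-u) / m = Real.exp (-v) / m := h
    have h3 : Real.exp (-u) = Real.exp (-v) := by
      have := congrArg (· * m) h2
      simpa [div_mul_cancel₀ _ hm.ne'] using this
    have h4 := Real.exp_injective h3
    linarith
  have himg : Ioo 0 (Real.exp (-1)/m) ⊆ f '' (Ioi 1) := by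
    rintro l ⟨hl0, hl1⟩
    refine ⟨-Real.log (l*m), ?_, ?_⟩
    · have h1 : l * m < Real.exp (-1) := (lt_div_iff₀ hm).mp hl1
      have h2 : Real.log (l*m) < -1 := by
        have h3 := Real.log_lt_log (by positivity) h1
        rwa [Real.log_exp] at h3
      exact mem_Ioi.mpr (by linarith)
    · show Real.exp (-(-Real.log (l*m))) / m = l
      rw [neg_neg, Real.exp_log (by positivity), mul_div_cancel_right₀ _ hm.ne']
  have hint : IntegrableOn (fun u : ℝ => |(-Real.exp (-u) / m)| • g (f u)) (Ioi 1) := by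
    have hbase : IntegrableOn (fun u : ℝ => u ^ (-c)) (Ioi 1) :=
      integrableOn_Ioi_rpow_of_lt (by linarith) zero_lt_one
    refine hbase.congr_fun (fun u hu => ?_) measurableSet_Ioi
    have he : Real.exp (-u) / m * m = Real.exp (-u) := div_mul_cancel₀ _ hm.ne'
    have habs : |(-Real.exp (-u) / m)| = Real.exp (-u) / m := by
      rw [abs_div, abs_neg, abs_of_pos (Real.exp_pos _), abs_of_pos hm]
    rw [smul_eq_mul, habs, hg]
    show u ^ (-c) = Real.exp (-u) / m * ((f u)⁻¹ * (-Real.log (f u * m)) ^ (-c))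
    rw [hf]
    show u ^ (-c) = Real.exp (-u) / m *
      ((Real.exp (-u) / m)⁻¹ * (-Real.log (Real.exp (-u) / m * m)) ^ (-c))
    rw [he, Real.log_exp, neg_neg, ← mul_assoc, mul_inv_cancel₀ (by positivity), one_mul]
  have h := (integrableOn_image_iff_integrableOn_abs_deriv_smul measurableSet_Ioi hderiv hinj g).mpr hint
  exact h.mono_set himg

set_option maxHeartbeats 2000000 in
theorem stmt13 (n : ℕ) (hn : 2 ≤ n) (x : Fin n → ℝ) (hx : ∀ i, 0 < x i)
    (hne : ∃ i j, x i ≠ x j) (a b : ℝ) (ha : 1 ≤ a) (hb : b ≤ 1)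
    (hna : (n : ℝ) > a - 1) (hb1 : b = 1 → (n : ℝ) > a) :
    IntegrableOn (fun p : ℝ × ℝ =>
        p.1 ^ ((n : ℝ) - a) * p.2 ^ ((n : ℝ) - b) *
          (∏ i, (1 - Real.exp (-(p.2 * x i))) ^ (p.1 - 1)) *
          Real.exp (-(p.2 * ∑ i, x i)))
      (Ioi (0 : ℝ) ×ˢ Ioi (0 : ℝ)) ∧
    0 < ∫ p in Ioi (0 : ℝ) ×ˢ Ioi (0 : ℝ),
        p.1 ^ ((n : ℝ) - a) * p.2 ^ ((n : ℝ) - b) *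
          (∏ i, (1 - Real.exp (-(p.2 * x i))) ^ (p.1 - 1)) *
          Real.exp (-(p.2 * ∑ i, x i)) := by
  have hn2 : (2:ℝ) ≤ (n:ℝ) := by exact_mod_cast hn
  have hn0 : (Finset.univ : Finset (Fin n)).Nonempty := ⟨⟨0, by omega⟩, Finset.mem_univ _⟩
  set S := ∑ i, x i with hSdef
  have hS : 0 < S := Finset.sum_pos (fun i _ => hx i) hn0
  set c := (n:ℝ) - a + 1 with hcdef
  have hc : 0 < c := by rw [hcdef]; linarith
  have hcn : c ≤ (n:ℝ) := by rw [hcdef]; linarith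
  have hs' : (-1:ℝ) < (n:ℝ) - a := by linarith
  have hnb : (0:ℝ) ≤ (n:ℝ) - b := by linarith
  have hnb' : (-1:ℝ) < (n:ℝ) - b := by linarith
  obtain ⟨i₀, -, hi₀⟩ := Finset.exists_min_image Finset.univ x hn0
  set m := x i₀ with hmdef
  have hm : 0 < m := hx i₀
  have hmle : ∀ i, m ≤ x i := fun i => hi₀ i (Finset.mem_univ i)
  have hcmS : c * m < S := by
    have hex : ∃ k, m < x k := by
      by_contra hcon
      push_neg at hcon
      obtain ⟨i, j, hij⟩ := hne
      have hall : ∀ k, x k = m := fun k => le_antisymm (hcon k) (hmle k)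
      exact hij (by rw [hall i, hall j])
    obtain ⟨k, hk⟩ := hex
    have h1 : (n:ℝ) * m < S := by
      have h2 := Finset.sum_lt_sum (fun i _ => hmle i) ⟨k, Finset.mem_univ k, hk⟩
      simpa [Finset.sum_const, Finset.card_univ, nsmul_eq_mul, hSdef] using h2
    nlinarith [hm]
  set T : ℝ → ℝ := fun l => ∑ i, Real.log (1 - Real.exp (-(l * x i))) with hTdef
  have hbase : ∀ l : ℝ, 0 < l → ∀ i, 0 < 1 - Real.exp (-(l * x i)) := by
    intro l hl i
    have h1 : Real.exp (-(l * x i)) < 1 := by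
      rw [← Real.exp_zero]
      exact Real.exp_lt_exp.mpr (by have := hx i; nlinarith)
    linarith
  have hbase1 : ∀ l : ℝ, ∀ i, 1 - Real.exp (-(l * x i)) ≤ 1 := by
    intro l i; have := (Real.exp_pos (-(l * x i))).le; linarith
  have hTsingle : ∀ l : ℝ, 0 < l → -Real.log (1 - Real.exp (-(l * m))) ≤ -T l := by
    intro l hl
    have h1 : ∀ i, 0 ≤ -Real.log (1 - Real.exp (-(l * x i))) := fun i => by
      have := Real.log_nonpos (hbase l hl i).le (hbase1 l i)
      linarith
    have h2 := Finset.single_le_sum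
      (f := fun i => -Real.log (1 - Real.exp (-(l * x i)))) (fun i _ => h1 i) (Finset.mem_univ i₀)
    rw [Finset.sum_neg_distrib] at h2
    exact h2
  have hTexp : ∀ l : ℝ, 0 < l → Real.exp (-(l * m)) ≤ -T l := by
    intro l hl
    refine le_trans ?_ (hTsingle l hl)
    have h1 : 0 < 1 - Real.exp (-(l * m)) := hbase l hl i₀
    have h2 := Real.log_le_sub_one_of_pos h1
    linarith
  have hTpos : ∀ l : ℝ, 0 < l → 0 < -T l :=
    fun l hl => lt_of_lt_of_le (Real.exp_pos _) (hTexp l hl)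
  have hQprod : ∀ l : ℝ, 0 < l →
      Real.exp (-T l) = ∏ i, (1 - Real.exp (-(l * x i)))⁻¹ := by
    intro l hl
    rw [show -T l = ∑ i, -Real.log (1 - Real.exp (-(l * x i))) by
      rw [Finset.sum_neg_distrib], Real.exp_sum]
    exact Finset.prod_congr rfl fun i _ => by
      rw [Real.exp_neg, Real.exp_log (hbase l hl i)]
  have hfac : ∀ l : ℝ, 0 < l → ∀ i,
      (1 - Real.exp (-(l * x i)))⁻¹ ≤ (1 + l * x i) / (l * x i) := by
    intro l hl i
    have hu : 0 < l * x i := by have := hx i; positivity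
    have h1 : Real.exp (-(l * x i)) ≤ (1 + l * x i)⁻¹ := by
      rw [Real.exp_neg]
      exact inv_anti₀ (by linarith)
        (by have := Real.add_one_le_exp (l * x i); linarith)
    have h2 : (1 + l * x i)⁻¹ = 1 - (l * x i)/(1 + l * x i) := by field_simp; ring
    have h3 : (l * x i)/(1 + l * x i) ≤ 1 - Real.exp (-(l * x i)) := by
      rw [h2] at h1; linarith
    have h4 := inv_anti₀ (by positivity) h3
    rwa [inv_div] at h4
  set K := ∏ i, (1 + x i)/(x i) with hKdef
  have hK : 0 < K := Finset.prod_pos fun i _ => by have := hx i; positivity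
  have hQsmall : ∀ l : ℝ, 0 < l → l ≤ 1 → Real.exp (-T l) ≤ K * (l⁻¹)^n := by
    intro l hl hl1
    rw [hQprod l hl]
    have h1 : ∀ i, (1 - Real.exp (-(l * x i)))⁻¹ ≤ (1 + x i)/(x i) * l⁻¹ := by
      intro i
      have hxi := hx i
      have hu : 0 < l * x i := by positivity
      calc (1 - Real.exp (-(l * x i)))⁻¹ ≤ (1 + l * x i) / (l * x i) := hfac l hl i
        _ ≤ (1 + x i) / (l * x i) := by gcongr; nlinarith
        _ = (1 + x i)/(x i) * l⁻¹ := by rw [mul_comm l (x i), ← div_div, div_eq_mul_inv]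
    calc (∏ i, (1 - Real.exp (-(l * x i)))⁻¹) ≤ ∏ i, ((1 + x i)/(x i) * l⁻¹) :=
          Finset.prod_le_prod (fun i _ => (inv_nonneg.mpr (hbase l hl i).le)) (fun i _ => h1 i)
      _ = K * (l⁻¹)^n := by
          rw [Finset.prod_mul_distrib, Finset.prod_const, hKdef]
          simp [Finset.card_univ]
  have hQbig : ∀ l : ℝ, 1 ≤ l → Real.exp (-T l) ≤ ∏ i, ((x i)⁻¹ + 1) := by
    intro l hl1
    have hl : 0 < l := lt_of_lt_of_le zero_lt_one hl1
    rw [hQprod l hl]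
    refine Finset.prod_le_prod (fun i _ => (inv_nonneg.mpr (hbase l hl i).le)) (fun i _ => ?_)
    have hxi := hx i
    have hu : 0 < l * x i := by positivity
    calc (1 - Real.exp (-(l * x i)))⁻¹ ≤ (1 + l * x i) / (l * x i) := hfac l hl i
      _ = (l * x i)⁻¹ + 1 := by rw [add_div, div_self hu.ne', one_div]
      _ ≤ (x i)⁻¹ + 1 := by gcongr; nlinarith
  have hR : ∀ l : ℝ, 0 < l → (1/(-T l)) ^ c ≤ Real.exp (l * m * c) := by
    intro l hl
    have h1 : 1/(-T l) ≤ Real.exp (l * m) := by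
      rw [one_div]
      calc (-T l)⁻¹ ≤ (Real.exp (-(l*m)))⁻¹ := inv_anti₀ (Real.exp_pos _) (hTexp l hl)
        _ = Real.exp (l*m) := by rw [← Real.exp_neg, neg_neg]
    calc (1/(-T l)) ^ c ≤ (Real.exp (l*m)) ^ c :=
          Real.rpow_le_rpow (le_of_lt (one_div_pos.mpr (hTpos l hl))) h1 hc.le
      _ = Real.exp (l * m * c) := (Real.exp_mul _ _).symm
  set F : ℝ × ℝ → ℝ := fun p =>
    p.1 ^ ((n : ℝ) - a) * p.2 ^ ((n : ℝ) - b) *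
      (∏ i, (1 - Real.exp (-(p.2 * x i))) ^ (p.1 - 1)) *
      Real.exp (-(p.2 * S)) with hFdef
  have hFm : Measurable F := by
    have hb1 : Measurable fun p : ℝ×ℝ => p.1 ^ ((n:ℝ)-a) := measurable_fst.pow measurable_const
    have hb2 : Measurable fun p : ℝ×ℝ => p.2 ^ ((n:ℝ)-b) := measurable_snd.pow measurable_const
    have hb3 : Measurable fun p : ℝ×ℝ =>
        ∏ i, (1 - Real.exp (-(p.2 * x i))) ^ (p.1 - 1) :=
      Finset.measurable_prod _ fun i _ =>
        (measurable_const.sub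
          (Real.measurable_exp.comp (measurable_snd.mul_const (x i)).neg)).pow
          (measurable_fst.sub measurable_const)
    have hb4 : Measurable fun p : ℝ×ℝ => Real.exp (-(p.2 * S)) :=
      Real.measurable_exp.comp (measurable_snd.mul_const S).neg
    exact ((hb1.mul hb2).mul hb3).mul hb4
  set G' : ℝ → ℝ := fun l =>
    (l ^ ((n:ℝ)-b) * Real.exp (-(l*S)) * Real.exp (-T l)) *
      ((1/(-T l)) ^ c * Real.Gamma c) with hG'def
  have hTm : Measurable T :=
    Finset.measurable_sum _ fun i _ =>
      Real.measurable_log.comp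
        (measurable_const.sub (Real.measurable_exp.comp (measurable_id.mul_const (x i)).neg))
  have hG'm : Measurable G' := by
    have g1 : Measurable fun l : ℝ => l ^ ((n:ℝ)-b) := measurable_id.pow measurable_const
    have g2 : Measurable fun l : ℝ => Real.exp (-(l*S)) :=
      Real.measurable_exp.comp (measurable_id.mul_const S).neg
    have g3 : Measurable fun l : ℝ => Real.exp (-T l) := Real.measurable_exp.comp hTm.neg
    have g4 : Measurable fun l : ℝ => (1/(-T l)) ^ c :=
      (measurable_const.div hTm.neg).pow measurable_const
    exact ((g1.mul g2).mul g3).mul (g4.mul measurable_const)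
  have hpt : ∀ l : ℝ, 0 < l → ∀ α : ℝ, F (α, l) =
      (l ^ ((n:ℝ)-b) * Real.exp (-(l*S)) * Real.exp (-T l)) *
        (α ^ ((n:ℝ)-a) * Real.exp (-((-T l) * α))) := by
    intro l hl α
    have hp : (∏ i, (1 - Real.exp (-(l * x i))) ^ (α - 1)) = Real.exp (T l * (α - 1)) := by
      have h1 : ∀ i ∈ Finset.univ, (1 - Real.exp (-(l * x i))) ^ (α - 1) =
          Real.exp (Real.log (1 - Real.exp (-(l * x i))) * (α-1)) :=
        fun i _ => Real.rpow_def_of_pos (hbase l hl i) _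
      rw [Finset.prod_congr rfl h1, ← Real.exp_sum, ← Finset.sum_mul]
    show α ^ ((n : ℝ) - a) * l ^ ((n : ℝ) - b) *
        (∏ i, (1 - Real.exp (-(l * x i))) ^ (α - 1)) * Real.exp (-(l * S)) = _
    rw [hp, show T l * (α - 1) = -((-T l) * α) + -T l by ring, Real.exp_add]
    ring
  have hCnn : ∀ l : ℝ, 0 < l →
      0 ≤ l ^ ((n:ℝ)-b) * Real.exp (-(l*S)) * Real.exp (-T l) := fun l hl =>
    mul_nonneg (mul_nonneg (Real.rpow_nonneg hl.le _) (Real.exp_pos _).le) (Real.exp_pos _).le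
  have hsec : ∀ l : ℝ, 0 < l → IntegrableOn (fun α => F (α, l)) (Ioi 0) := by
    intro l hl
    have h1 := (auxInt hs' (hTpos l hl)).const_mul
      (l ^ ((n:ℝ)-b) * Real.exp (-(l*S)) * Real.exp (-T l))
    exact h1.congr (Filter.Eventually.of_forall fun α => (hpt l hl α).symm)
  have hval : ∀ l : ℝ, 0 < l → ∫ α in Ioi (0:ℝ), ‖F (α, l)‖ = G' l := by
    intro l hl
    have h1 : ∫ α in Ioi (0:ℝ), ‖F (α, l)‖ =
        ∫ α in Ioi (0:ℝ), (l ^ ((n:ℝ)-b) * Real.exp (-(l*S)) * Real.exp (-T l)) *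
          (α ^ ((n:ℝ)-a) * Real.exp (-((-T l) * α))) := by
      refine setIntegral_congr_fun measurableSet_Ioi (fun α hα => ?_)
      rw [hpt l hl α, Real.norm_eq_abs, abs_of_nonneg]
      exact mul_nonneg (hCnn l hl)
        (mul_nonneg (Real.rpow_nonneg (le_of_lt hα) _) (Real.exp_pos _).le)
    rw [h1, integral_const_mul, auxVal hs' (hTpos l hl), hG'def]
  have hG'nn : ∀ l : ℝ, 0 < l → 0 ≤ G' l := fun l hl =>
    mul_nonneg (hCnn l hl)
      (mul_nonneg (Real.rpow_nonneg (le_of_lt (one_div_pos.mpr (hTpos l hl))) _)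
        (Real.Gamma_pos_of_pos hc).le)
  have key_mul : ∀ {P E E' Q Q' R R' γ : ℝ}, 0 ≤ P → 0 ≤ E → E ≤ E' → 0 ≤ Q → 0 ≤ Q' →
      Q ≤ Q' → 0 ≤ R → R ≤ R' → 0 ≤ γ →
      P * E * Q * (R * γ) ≤ P * E' * Q' * (R' * γ) := by
    intro P E E' Q Q' R R' γ hP hE hEE hQ0 hQ' hQQ hR0 hRR hγ
    have hE' : 0 ≤ E' := le_trans hE hEE
    exact mul_le_mul
      (mul_le_mul (mul_le_mul_of_nonneg_left hEE hP) hQQ hQ0 (mul_nonneg hP hE'))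
      (mul_le_mul_of_nonneg_right hRR hγ) (mul_nonneg hR0 hγ)
      (mul_nonneg (mul_nonneg hP hE') hQ')
  set δ := min 1 (Real.exp (-1) / (2*m)) with hδdef
  have hδ0 : 0 < δ := lt_min zero_lt_one (by positivity)
  have hδ1 : δ ≤ 1 := min_le_left _ _
  have hδ2 : δ ≤ Real.exp (-1) / (2*m) := min_le_right _ _
  have hI3 : IntegrableOn G' (Ioi 1) := by
    have hε : (0:ℝ) < S - c*m := by linarith
    have hD := ((auxInt hnb' hε).mono_set (Ioi_subset_Ioi zero_le_one)).const_mul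
      ((∏ i, ((x i)⁻¹ + 1)) * Real.Gamma c)
    refine Integrable.mono' hD hG'm.aestronglyMeasurable.restrict ?_
    filter_upwards [ae_restrict_mem measurableSet_Ioi] with l hl
    have hl1 : (1:ℝ) < l := hl
    have hl0 : 0 < l := lt_trans zero_lt_one hl1
    rw [Real.norm_eq_abs, abs_of_nonneg (hG'nn l hl0)]
    calc G' l ≤ (l ^ ((n:ℝ)-b) * Real.exp (-(l*S)) * (∏ i, ((x i)⁻¹ + 1))) *
          (Real.exp (l*m*c) * Real.Gamma c) := by
          simp only [hG'def]
          exact key_mul (Real.rpow_nonneg hl0.le _) (Real.exp_pos _).le le_rfl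
            (Real.exp_pos _).le
            (Finset.prod_nonneg fun i _ => by have := hx i; positivity)
            (hQbig l hl1.le)
            (Real.rpow_nonneg (le_of_lt (one_div_pos.mpr (hTpos l hl0))) _)
            (hR l hl0) (Real.Gamma_pos_of_pos hc).le
      _ = ((∏ i, ((x i)⁻¹ + 1)) * Real.Gamma c) *
          (l ^ ((n:ℝ)-b) * Real.exp (-((S - c*m) * l))) := by
          rw [show -((S - c*m) * l) = -(l*S) + l*m*c by ring, Real.exp_add]; ring
  have hI2 : IntegrableOn G' (Ioc δ 1) := by
    have hD2 : IntegrableOn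
        (fun _ : ℝ => (1 * 1 * (K * (δ⁻¹)^n)) * (Real.exp (m*c) * Real.Gamma c)) (Ioc δ 1) :=
      integrableOn_const measure_Ioc_lt_top.ne
    refine Integrable.mono' hD2 hG'm.aestronglyMeasurable.restrict ?_
    filter_upwards [ae_restrict_mem measurableSet_Ioc] with l hl
    have hl0 : 0 < l := lt_trans hδ0 hl.1
    rw [Real.norm_eq_abs, abs_of_nonneg (hG'nn l hl0)]
    calc G' l ≤ (l ^ ((n:ℝ)-b) * 1 * (K * (l⁻¹)^n)) * (Real.exp (l*m*c) * Real.Gamma c) := by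
          simp only [hG'def]
          exact key_mul (Real.rpow_nonneg hl0.le _) (Real.exp_pos _).le
            (Real.exp_le_one_iff.mpr (by nlinarith)) (Real.exp_pos _).le
            (mul_nonneg hK.le (pow_nonneg (inv_nonneg.mpr hl0.le) n))
            (hQsmall l hl0 hl.2)
            (Real.rpow_nonneg (le_of_lt (one_div_pos.mpr (hTpos l hl0))) _)
            (hR l hl0) (Real.Gamma_pos_of_pos hc).le
      _ ≤ (1 * 1 * (K * (δ⁻¹)^n)) * (Real.exp (m*c) * Real.Gamma c) := by
          have hγ : (0:ℝ) ≤ Real.Gamma c := (Real.Gamma_pos_of_pos hc).le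
          have hP1 : l ^ ((n:ℝ)-b) ≤ 1 := Real.rpow_le_one hl0.le hl.2 hnb
          have hKV : K * (l⁻¹)^n ≤ K * (δ⁻¹)^n :=
            mul_le_mul_of_nonneg_left
              (pow_le_pow_left₀ (inv_nonneg.mpr hl0.le) (inv_anti₀ hδ0 hl.1.le) n) hK.le
          have hA : l ^ ((n:ℝ)-b) * 1 ≤ 1 * 1 :=
            mul_le_mul hP1 le_rfl zero_le_one zero_le_one
          have hB : (l ^ ((n:ℝ)-b) * 1) * (K * (l⁻¹)^n) ≤ (1 * 1) * (K * (δ⁻¹)^n) :=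
            mul_le_mul hA hKV
              (mul_nonneg hK.le (pow_nonneg (inv_nonneg.mpr hl0.le) n)) (by norm_num)
          have hC : Real.exp (l*m*c) * Real.Gamma c ≤ Real.exp (m*c) * Real.Gamma c :=
            mul_le_mul_of_nonneg_right (Real.exp_le_exp.mpr (by
              nlinarith [mul_nonneg (mul_nonneg (sub_nonneg.mpr hl.2) hm.le) hc.le])) hγ
          exact mul_le_mul hB hC (mul_nonneg (Real.exp_pos _).le hγ)
            (mul_nonneg (by norm_num)
              (mul_nonneg hK.le (pow_nonneg (inv_nonneg.mpr hδ0.le) n)))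
  have hpow : ∀ l : ℝ, 0 < l → l ^ ((n:ℝ)-b) * (l⁻¹)^n = l ^ (-b) := by
    intro l hl0
    rw [← Real.rpow_natCast l⁻¹ n, Real.inv_rpow hl0.le, ← Real.rpow_neg hl0.le,
      ← Real.rpow_add hl0]
    congr 1; ring
  have hI1 : IntegrableOn G' (Ioc 0 δ) := by
    rcases lt_or_eq_of_le hb with hblt | hbeq
    · have hD : IntegrableOn
          (fun l : ℝ => (K * Real.exp (m*c) * Real.Gamma c) * l ^ (-b)) (Ioc 0 δ) := by
        have h1 : IntegrableOn (fun l : ℝ => l ^ (-b)) (Ioo (0:ℝ) (δ+1)) :=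
          (intervalIntegral.integrableOn_Ioo_rpow_iff (by linarith)).mpr (by linarith)
        exact (h1.mono_set (fun l hl => ⟨hl.1, lt_of_le_of_lt hl.2 (by linarith)⟩)).const_mul _
      refine Integrable.mono' hD hG'm.aestronglyMeasurable.restrict ?_
      filter_upwards [ae_restrict_mem measurableSet_Ioc] with l hl
      have hl0 : 0 < l := hl.1
      have hl1 : l ≤ 1 := le_trans hl.2 hδ1
      rw [Real.norm_eq_abs, abs_of_nonneg (hG'nn l hl0)]
      calc G' l ≤ (l ^ ((n:ℝ)-b) * 1 * (K * (l⁻¹)^n)) * (Real.exp (m*c) * Real.Gamma c) := by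
            simp only [hG'def]
            exact key_mul (Real.rpow_nonneg hl0.le _) (Real.exp_pos _).le
              (Real.exp_le_one_iff.mpr (by nlinarith)) (Real.exp_pos _).le
              (mul_nonneg hK.le (pow_nonneg (inv_nonneg.mpr hl0.le) n))
              (hQsmall l hl0 hl1)
              (Real.rpow_nonneg (le_of_lt (one_div_pos.mpr (hTpos l hl0))) _)
              (le_trans (hR l hl0) (Real.exp_le_exp.mpr (by
                nlinarith [mul_nonneg (mul_nonneg (sub_nonneg.mpr hl1) hm.le) hc.le])))
              (Real.Gamma_pos_of_pos hc).le
        _ = (K * Real.exp (m*c) * Real.Gamma c) * l ^ (-b) := by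
            rw [mul_one, show l ^ ((n:ℝ)-b) * (K * (l⁻¹)^n) * (Real.exp (m*c) * Real.Gamma c)
              = (K * Real.exp (m*c) * Real.Gamma c) * (l ^ ((n:ℝ)-b) * (l⁻¹)^n) from by ring,
              hpow l hl0]
    · have hc1 : 1 < c := by rw [hcdef]; have := hb1 hbeq; linarith
      have hδm : Ioc (0:ℝ) δ ⊆ Ioo 0 (Real.exp (-1)/m) := by
        intro l hl
        refine ⟨hl.1, lt_of_le_of_lt (le_trans hl.2 hδ2) ?_⟩
        exact div_lt_div_of_pos_left (Real.exp_pos _) hm (by linarith)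
      have hD := ((auxLog hc1 hm).mono_set hδm).const_mul (K * Real.Gamma c)
      refine Integrable.mono' hD hG'm.aestronglyMeasurable.restrict ?_
      filter_upwards [ae_restrict_mem measurableSet_Ioc] with l hl
      have hl0 : 0 < l := hl.1
      have hl1 : l ≤ 1 := le_trans hl.2 hδ1
      have hlm : l * m ≤ Real.exp (-1) / 2 := by
        have h1 : l ≤ Real.exp (-1)/(2*m) := le_trans hl.2 hδ2
        calc l * m ≤ (Real.exp (-1)/(2*m)) * m := by nlinarith
          _ = Real.exp (-1)/2 := by field_simp
      have he1 : Real.exp (-1) < 1 := by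
        rw [← Real.exp_zero]; exact Real.exp_lt_exp.mpr (by norm_num)
      have hlm1 : l * m < 1 := by nlinarith [Real.exp_pos (-1:ℝ)]
      have hlogpos : 0 < -Real.log (l*m) := by
        have := Real.log_neg (by positivity) hlm1; linarith
      have hTlog : -Real.log (l*m) ≤ -T l := by
        refine le_trans ?_ (hTsingle l hl0)
        have h1 : 1 - Real.exp (-(l*m)) ≤ l*m := by
          have := Real.add_one_le_exp (-(l*m)); linarith
        have h2 := Real.log_le_log (hbase l hl0 i₀) h1
        linarith
      have hR' : (1/(-T l)) ^ c ≤ (-Real.log (l*m)) ^ (-c) := by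
        have h1 : 1/(-T l) ≤ (-Real.log (l*m))⁻¹ := by
          rw [one_div]; exact inv_anti₀ hlogpos hTlog
        calc (1/(-T l)) ^ c ≤ ((-Real.log (l*m))⁻¹) ^ c :=
              Real.rpow_le_rpow (le_of_lt (one_div_pos.mpr (hTpos l hl0))) h1 hc.le
          _ = (-Real.log (l*m)) ^ (-c) := by
              rw [Real.inv_rpow hlogpos.le, ← Real.rpow_neg hlogpos.le]
      have hpow1 : l ^ ((n:ℝ)-b) * (l⁻¹)^n = l⁻¹ := by
        rw [hpow l hl0, hbeq, Real.rpow_neg_one]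
      rw [Real.norm_eq_abs, abs_of_nonneg (hG'nn l hl0)]
      calc G' l ≤ (l ^ ((n:ℝ)-b) * 1 * (K * (l⁻¹)^n)) *
            ((-Real.log (l*m)) ^ (-c) * Real.Gamma c) := by
            simp only [hG'def]
            exact key_mul (Real.rpow_nonneg hl0.le _) (Real.exp_pos _).le
              (Real.exp_le_one_iff.mpr (by nlinarith)) (Real.exp_pos _).le
              (mul_nonneg hK.le (pow_nonneg (inv_nonneg.mpr hl0.le) n))
              (hQsmall l hl0 hl1)
              (Real.rpow_nonneg (le_of_lt (one_div_pos.mpr (hTpos l hl0))) _)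
              hR' (Real.Gamma_pos_of_pos hc).le
        _ = (K * Real.Gamma c) * (l⁻¹ * (-Real.log (l*m)) ^ (-c)) := by
            rw [mul_one, show l ^ ((n:ℝ)-b) * (K * (l⁻¹)^n) *
                ((-Real.log (l*m)) ^ (-c) * Real.Gamma c)
              = (K * Real.Gamma c) *
                ((l ^ ((n:ℝ)-b) * (l⁻¹)^n) * (-Real.log (l*m)) ^ (-c)) from by ring,
              hpow1]
  have hG'int : IntegrableOn G' (Ioi 0) := by
    have h12 := hI1.union hI2
    rw [Set.Ioc_union_Ioc_eq_Ioc hδ0.le hδ1] at h12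
    have h := h12.union hI3
    rwa [Set.Ioc_union_Ioi_eq_Ioi zero_le_one] at h
  have key : IntegrableOn F (Ioi 0 ×ˢ Ioi 0) := by
    rw [IntegrableOn, Measure.volume_eq_prod, ← Measure.prod_restrict]
    refine (integrable_prod_iff' hFm.aestronglyMeasurable).mpr ⟨?_, ?_⟩
    · filter_upwards [ae_restrict_mem measurableSet_Ioi] with l hl
      exact hsec l hl
    · refine hG'int.congr ?_
      filter_upwards [ae_restrict_mem measurableSet_Ioi] with l hl
      exact (hval l hl).symm
  refine ⟨key, ?_⟩
  have hpos : ∀ p : ℝ × ℝ, p ∈ Ioi (0:ℝ) ×ˢ Ioi (0:ℝ) → 0 < F p := by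
    intro p hp
    rw [Set.mem_prod] at hp
    obtain ⟨h1, h2⟩ := hp
    refine mul_pos (mul_pos (mul_pos ?_ ?_) ?_) (Real.exp_pos _)
    · exact Real.rpow_pos_of_pos h1 _
    · exact Real.rpow_pos_of_pos h2 _
    · exact Finset.prod_pos fun i _ => Real.rpow_pos_of_pos (hbase p.2 h2 i) _
  have hmeas : MeasurableSet (Ioi (0:ℝ) ×ˢ Ioi (0:ℝ)) :=
    measurableSet_Ioi.prod measurableSet_Ioi
  refine (setIntegral_pos_iff_support_of_nonneg_ae ?_ key).mpr ?_
  · filter_upwards [ae_restrict_mem hmeas] with p hp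
    exact (hpos p hp).le
  · have hsub : (Ioi (0:ℝ) ×ˢ Ioi (0:ℝ)) ⊆ Function.support F :=
      fun p hp => (hpos p hp).ne'
    rw [Set.inter_eq_right.mpr hsub]
    exact (isOpen_Ioi.prod isOpen_Ioi).measure_pos volume
      ⟨(1,1), Set.mem_prod.mpr ⟨Set.mem_Ioi.mpr zero_lt_one, Set.mem_Ioi.mpr zero_lt_one⟩⟩
end

section
/- Let x₁,…,xₙ be positive reals, not all equal, with n ≥ 2, and let a ≥ 1, b ≤ 1, r ≥ 0 with n > a, and let π(λ) = λ^{n-b} e^{-λ∑x_i} ∏(1-e^{-λx_i})^{-1} (-∑ln(1-e^{-λx_i}))^{-(n-a+1)}. Then for r > 0 and any ε > 0, sup_{λ≥ε} π(λ)^{1/(r+1)} and sup_{λ≥ε} λ · π(λ)^{r/(r+1)} are finite. -/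
open Real Set

lemma aux_bdd (p c ε : ℝ) (hc : 0 < c) (hε : 0 < ε) :
    ∃ M, ∀ l : ℝ, ε ≤ l → l ^ p * Real.exp (-(c * l)) ≤ M := by
  have htend : Filter.Tendsto (fun l : ℝ => l ^ p * Real.exp (-c * l))
      Filter.atTop (nhds 0) := tendsto_rpow_mul_exp_neg_mul_atTop_nhds_zero p c hc
  have hev : ∀ᶠ l in Filter.atTop, l ^ p * Real.exp (-c * l) ≤ 1 := by
    filter_upwards [htend.eventually (eventually_le_nhds (by norm_num : (0:ℝ) < 1))] with l h
    exact h
  obtain ⟨N, hN⟩ := hev.exists_forall_of_atTop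
  have hcont : ContinuousOn (fun l : ℝ => l ^ p * Real.exp (-(c * l))) (Icc ε (max N ε)) := by
    apply ContinuousOn.mul
    · apply ContinuousOn.rpow_const continuousOn_id
      intro l hl
      exact Or.inl (ne_of_gt (lt_of_lt_of_le hε hl.1))
    · exact (Real.continuous_exp.comp
        (continuous_neg.comp (continuous_const.mul continuous_id))).continuousOn
  obtain ⟨M₀, hM₀⟩ := (isCompact_Icc.image_of_continuousOn hcont).bddAbove
  refine ⟨max M₀ 1, fun l hl => ?_⟩
  rcases le_total l (max N ε) with h | h
  · exact le_trans (hM₀ (Set.mem_image_of_mem _ ⟨hl, h⟩)) (le_max_left _ _)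
  · have := hN l (le_trans (le_max_left N ε) h)
    rw [neg_mul] at this
    exact le_trans this (le_max_right _ _)

lemma aux_pos_sub (t : ℝ) (ht : 0 < t) : 0 < 1 - Real.exp (-t) := by
  have := Real.exp_lt_exp.mpr (neg_lt_zero.mpr ht)
  rw [Real.exp_zero] at this
  linarith

theorem stmt16 (n : ℕ) (hn : 2 ≤ n) (x : Fin n → ℝ) (hx : ∀ i, 0 < x i)
    (hne : ∃ i j, x i ≠ x j) (a b r : ℝ) (ha : 1 ≤ a) (hb : b ≤ 1) (hr : 0 < r)
    (hna : (n : ℝ) > a) (ε : ℝ) (hε : 0 < ε) :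
    ∃ M : ℝ, ∀ l : ℝ, ε ≤ l →
      (l ^ ((n : ℝ) - b) * Real.exp (-(l * ∑ i, x i)) *
          (∏ i, (1 - Real.exp (-(l * x i)))⁻¹) *
          (-∑ i, Real.log (1 - Real.exp (-(l * x i)))) ^ (-((n : ℝ) - a + 1)))
          ^ (1 / (r + 1)) ≤ M ∧
      l * (l ^ ((n : ℝ) - b) * Real.exp (-(l * ∑ i, x i)) *
          (∏ i, (1 - Real.exp (-(l * x i)))⁻¹) *
          (-∑ i, Real.log (1 - Real.exp (-(l * x i)))) ^ (-((n : ℝ) - a + 1)))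
          ^ (r / (r + 1)) ≤ M := by
  have hn0 : 0 < n := by omega
  haveI : Nonempty (Fin n) := ⟨⟨0, hn0⟩⟩
  obtain ⟨m₀, hm₀⟩ := Finite.exists_min x
  set S := ∑ i, x i with hSdef
  set p := (n : ℝ) - b with hpdef
  set δ := S - ((n : ℝ) - a + 1) * x m₀ with hδdef
  have hxm : 0 < x m₀ := hx m₀
  have hSgt : (n : ℝ) * x m₀ < S := by
    obtain ⟨i, j, hij⟩ := hne
    have hk : ∃ k, x m₀ < x k := by
      by_contra h
      push_neg at h
      have hall : ∀ k, x k = x m₀ := fun k => le_antisymm (h k) (hm₀ k)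
      exact hij (by rw [hall i, hall j])
    obtain ⟨k, hk⟩ := hk
    calc (n : ℝ) * x m₀ = ∑ _i : Fin n, x m₀ := by
          rw [Finset.sum_const, Finset.card_univ, Fintype.card_fin, nsmul_eq_mul]
      _ < S := Finset.sum_lt_sum (fun i _ => hm₀ i) ⟨k, Finset.mem_univ k, hk⟩
  have hδ : 0 < δ := by
    have h1 : ((n : ℝ) - a + 1) * x m₀ ≤ (n : ℝ) * x m₀ := by nlinarith
    rw [hδdef]; linarith
  set C₁ := ∏ i, (1 - Real.exp (-(ε * x i)))⁻¹ with hC₁def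
  have hC₁ : 0 < C₁ :=
    Finset.prod_pos fun i _ => inv_pos.mpr (aux_pos_sub _ (mul_pos hε (hx i)))
  -- pointwise bound
  have key : ∀ l : ℝ, ε ≤ l →
      (l ^ p * Real.exp (-(l * S)) * (∏ i, (1 - Real.exp (-(l * x i)))⁻¹) *
        (-∑ i, Real.log (1 - Real.exp (-(l * x i)))) ^ (-((n : ℝ) - a + 1)))
        ≤ C₁ * (l ^ p * Real.exp (-(δ * l))) ∧
      0 ≤ l ^ p * Real.exp (-(l * S)) * (∏ i, (1 - Real.exp (-(l * x i)))⁻¹) *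
        (-∑ i, Real.log (1 - Real.exp (-(l * x i)))) ^ (-((n : ℝ) - a + 1)) := by
    intro l hl
    have hl0 : 0 < l := lt_of_lt_of_le hε hl
    have h1i : ∀ i : Fin n, 0 < 1 - Real.exp (-(l * x i)) :=
      fun i => aux_pos_sub _ (mul_pos hl0 (hx i))
    have hP : (∏ i, (1 - Real.exp (-(l * x i)))⁻¹) ≤ C₁ := by
      apply Finset.prod_le_prod (fun i _ => (inv_pos.mpr (h1i i)).le)
      intro i _
      apply inv_anti₀ (aux_pos_sub _ (mul_pos hε (hx i)))
      have : Real.exp (-(l * x i)) ≤ Real.exp (-(ε * x i)) := by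
        apply Real.exp_le_exp.mpr
        have := (hx i)
        nlinarith
      linarith
    have hterm : ∀ i : Fin n,
        Real.exp (-(l * x i)) ≤ -Real.log (1 - Real.exp (-(l * x i))) := by
      intro i
      have := Real.log_le_sub_one_of_pos (h1i i)
      linarith
    have hL : Real.exp (-(l * x m₀)) ≤ -∑ i, Real.log (1 - Real.exp (-(l * x i))) := by
      rw [← Finset.sum_neg_distrib]
      calc Real.exp (-(l * x m₀)) ≤ -Real.log (1 - Real.exp (-(l * x m₀))) := hterm m₀
        _ ≤ ∑ i, -Real.log (1 - Real.exp (-(l * x i))) := by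
            apply Finset.single_le_sum (f := fun i => -Real.log (1 - Real.exp (-(l * x i))))
              (fun i _ => le_trans (Real.exp_pos _).le (hterm i)) (Finset.mem_univ m₀)
    have hLpos : (0:ℝ) < -∑ i, Real.log (1 - Real.exp (-(l * x i))) :=
      lt_of_lt_of_le (Real.exp_pos _) hL
    have hLp : (-∑ i, Real.log (1 - Real.exp (-(l * x i)))) ^ (-((n : ℝ) - a + 1)) ≤
        Real.exp (l * x m₀ * ((n : ℝ) - a + 1)) := by
      have h2 : (-∑ i, Real.log (1 - Real.exp (-(l * x i)))) ^ (-((n : ℝ) - a + 1)) ≤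
          Real.exp (-(l * x m₀)) ^ (-((n : ℝ) - a + 1)) :=
        Real.rpow_le_rpow_of_nonpos (Real.exp_pos _) hL (by linarith)
      rwa [← Real.exp_mul, show -(l * x m₀) * -((n : ℝ) - a + 1) = l * x m₀ * ((n : ℝ) - a + 1)
        by ring] at h2
    have hLp0 : (0:ℝ) ≤
        (-∑ i, Real.log (1 - Real.exp (-(l * x i)))) ^ (-((n : ℝ) - a + 1)) :=
      Real.rpow_nonneg hLpos.le _
    have hAE : (0:ℝ) ≤ l ^ p * Real.exp (-(l * S)) := by positivity
    constructor
    · calc l ^ p * Real.exp (-(l * S)) * (∏ i, (1 - Real.exp (-(l * x i)))⁻¹) *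
            (-∑ i, Real.log (1 - Real.exp (-(l * x i)))) ^ (-((n : ℝ) - a + 1))
          ≤ l ^ p * Real.exp (-(l * S)) * C₁ * Real.exp (l * x m₀ * ((n : ℝ) - a + 1)) := by
            apply mul_le_mul (mul_le_mul_of_nonneg_left hP hAE) hLp hLp0
            positivity
        _ = C₁ * (l ^ p * (Real.exp (-(l * S)) * Real.exp (l * x m₀ * ((n : ℝ) - a + 1)))) := by
            ring
        _ = C₁ * (l ^ p * Real.exp (-(δ * l))) := by
            rw [← Real.exp_add]
            congr 2
            rw [hδdef]
            ring
    · have hPn : (0:ℝ) ≤ ∏ i, (1 - Real.exp (-(l * x i)))⁻¹ :=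
        Finset.prod_nonneg fun i _ => (inv_pos.mpr (h1i i)).le
      exact mul_nonneg (mul_nonneg hAE hPn) hLp0
  -- finishing
  have hq₁ : (0:ℝ) < 1 / (r + 1) := by positivity
  have hq₂ : (0:ℝ) < r / (r + 1) := by positivity
  obtain ⟨M₁, hM₁⟩ := aux_bdd (p * (1 / (r + 1))) (δ * (1 / (r + 1))) ε (mul_pos hδ hq₁) hε
  obtain ⟨M₂, hM₂⟩ := aux_bdd (p * (r / (r + 1)) + 1) (δ * (r / (r + 1))) ε (mul_pos hδ hq₂) hε
  refine ⟨max (C₁ ^ (1 / (r + 1)) * M₁) (C₁ ^ (r / (r + 1)) * M₂), fun l hl => ?_⟩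
  have hl0 : 0 < l := lt_of_lt_of_le hε hl
  obtain ⟨hkey, hπ0⟩ := key l hl
  have hrw : ∀ q : ℝ, 0 ≤ q → (C₁ * (l ^ p * Real.exp (-(δ * l)))) ^ q =
      C₁ ^ q * (l ^ (p * q) * Real.exp (-(δ * q * l))) := by
    intro q hq
    rw [Real.mul_rpow hC₁.le (by positivity),
      Real.mul_rpow (Real.rpow_nonneg hl0.le _) (Real.exp_pos _).le,
      ← Real.rpow_mul hl0.le, ← Real.exp_mul]
    congr 2
    ring
  constructor
  · calc (l ^ p * Real.exp (-(l * S)) * (∏ i, (1 - Real.exp (-(l * x i)))⁻¹) *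
          (-∑ i, Real.log (1 - Real.exp (-(l * x i)))) ^ (-((n : ℝ) - a + 1)))
          ^ (1 / (r + 1))
        ≤ (C₁ * (l ^ p * Real.exp (-(δ * l)))) ^ (1 / (r + 1)) :=
          Real.rpow_le_rpow hπ0 hkey hq₁.le
      _ = C₁ ^ (1 / (r + 1)) * (l ^ (p * (1 / (r + 1))) *
            Real.exp (-(δ * (1 / (r + 1)) * l))) := hrw _ hq₁.le
      _ ≤ C₁ ^ (1 / (r + 1)) * M₁ :=
          mul_le_mul_of_nonneg_left (hM₁ l hl) (Real.rpow_nonneg hC₁.le _)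
      _ ≤ _ := le_max_left _ _
  · calc l * (l ^ p * Real.exp (-(l * S)) * (∏ i, (1 - Real.exp (-(l * x i)))⁻¹) *
          (-∑ i, Real.log (1 - Real.exp (-(l * x i)))) ^ (-((n : ℝ) - a + 1)))
          ^ (r / (r + 1))
        ≤ l * (C₁ * (l ^ p * Real.exp (-(δ * l)))) ^ (r / (r + 1)) := by
          apply mul_le_mul_of_nonneg_left (Real.rpow_le_rpow hπ0 hkey hq₂.le) hl0.le
      _ = C₁ ^ (r / (r + 1)) * (l ^ (p * (r / (r + 1)) + 1) *
            Real.exp (-(δ * (r / (r + 1)) * l))) := by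
          rw [hrw _ hq₂.le, Real.rpow_add_one hl0.ne' (p * (r / (r + 1)))]
          ring
      _ ≤ C₁ ^ (r / (r + 1)) * M₂ :=
          mul_le_mul_of_nonneg_left (hM₂ l hl) (Real.rpow_nonneg hC₁.le _)
      _ ≤ _ := le_max_right _ _
end

section
/- Let π : (0,∞) → (0,∞) be measurable with ∫₀^∞ π(λ) dλ < ∞, and fix r ≥ 0. If (U, V) is uniformly distributed on C(r) = {(u,v) : 0 < u ≤ π(v/u^r)^{1/(r+1)}} and C(r) has finite positive Lebesgue measure, then λ = V/U^r has density π(λ)/∫π(λ′)dλ′ . -/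
open Real MeasureTheory Set

lemma aux_inner19 (r : ℝ) (hr : 0 ≤ r) (c : ℝ) (hc : 0 ≤ c) :
    ∫⁻ u in Ioc (0:ℝ) c, ENNReal.ofReal (u ^ r) = ENNReal.ofReal (c ^ (r+1) / (r+1)) := by
  have hr1 : (0:ℝ) < r + 1 := by linarith
  have hInt : IntegrableOn (fun u : ℝ => u ^ r) (Ioc 0 c) := by
    rw [← intervalIntegrable_iff_integrableOn_Ioc_of_le hc]
    exact intervalIntegral.intervalIntegrable_rpow' (by linarith)
  rw [← ofReal_integral_eq_lintegral_ofReal hInt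
    (ae_restrict_of_forall_mem measurableSet_Ioc fun u hu => Real.rpow_nonneg hu.1.le r)]
  congr 1
  rw [← intervalIntegral.integral_of_le hc, integral_rpow (Or.inl (by linarith)),
    Real.zero_rpow hr1.ne', sub_zero]

theorem stmt19 (p : ℝ → ℝ) (hmeas : Measurable p) (hpos : ∀ l : ℝ, 0 < l → 0 < p l)
    (hzero : ∀ l : ℝ, l ≤ 0 → p l = 0) (hint : IntegrableOn p (Ioi 0))
    (r : ℝ) (hr : 0 ≤ r) (C : Set (ℝ × ℝ))
    (hC : C = {q : ℝ × ℝ | 0 < q.1 ∧ q.1 ≤ (p (q.2 / q.1 ^ r)) ^ (1 / (r + 1))})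
    (hfin : volume C < ⊤) (hposC : 0 < volume C) :
    Measure.map (fun q : ℝ × ℝ => q.2 / q.1 ^ r)
        ((volume C)⁻¹ • volume.restrict C) =
      volume.withDensity
        (fun l : ℝ => ENNReal.ofReal (p l / ∫ t in Ioi (0 : ℝ), p t)) := by
  have hr1 : (0:ℝ) < r + 1 := by linarith
  have hpnn : ∀ l, 0 ≤ p l := fun l => by
    rcases le_or_gt l 0 with h | h
    · rw [hzero l h]
    · exact (hpos l h).le
  set I : ℝ := ∫ t in Ioi (0:ℝ), p t with hI
  set f : ℝ × ℝ → ℝ := fun q => q.2 / q.1 ^ r with hf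
  have hrc : Continuous fun u : ℝ => u ^ r := Real.continuous_rpow_const hr
  have hfmeas : Measurable f := measurable_snd.div (hrc.measurable.comp measurable_fst)
  have hgmeas : Measurable fun w : ℝ × ℝ => ENNReal.ofReal (w.1 ^ r) :=
    ENNReal.measurable_ofReal.comp (hrc.measurable.comp measurable_fst)
  -- key computation
  have key : ∀ s : Set ℝ, MeasurableSet s →
      volume (f ⁻¹' s ∩ C) = ENNReal.ofReal (1/(r+1)) * ∫⁻ l in s, ENNReal.ofReal (p l) := by
    intro s hs
    set W : Set (ℝ × ℝ) := {w : ℝ × ℝ | 0 < w.1 ∧ w.1 ^ (r+1) ≤ p w.2 ∧ w.2 ∈ s} with hW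
    have hWmeas : MeasurableSet W := by
      have h1 : MeasurableSet {w : ℝ × ℝ | 0 < w.1} :=
        measurableSet_lt measurable_const measurable_fst
      have h2 : MeasurableSet {w : ℝ × ℝ | w.1 ^ (r+1) ≤ p w.2} :=
        measurableSet_le ((Real.continuous_rpow_const (by linarith)).measurable.comp
          measurable_fst) (hmeas.comp measurable_snd)
      have h3 : MeasurableSet {w : ℝ × ℝ | w.2 ∈ s} := measurable_snd hs
      exact h1.inter (h2.inter h3)
    set F : ℝ → ℝ → ENNReal := fun u l => W.indicator (fun w => ENNReal.ofReal (w.1 ^ r)) (u, l)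
      with hF
    set S : Set (ℝ × ℝ) := {q : ℝ × ℝ | 0 < q.1 ∧ q.1 ^ (r+1) ≤ p (f q) ∧ f q ∈ s} with hS
    have hset : f ⁻¹' s ∩ C = S := by
      rw [hC]; ext q
      simp only [hS, mem_inter_iff, mem_preimage, mem_setOf_eq]
      constructor
      · rintro ⟨hqs, hq1, hq2⟩
        refine ⟨hq1, ?_, hqs⟩
        rwa [one_div, Real.le_rpow_inv_iff_of_pos hq1.le (hpnn _) hr1] at hq2
      · rintro ⟨hq1, hq2, hqs⟩
        refine ⟨hqs, hq1, ?_⟩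
        rwa [one_div, Real.le_rpow_inv_iff_of_pos hq1.le (hpnn _) hr1]
    have hSmeas : MeasurableSet S := (measurable_fst.prodMk hfmeas) hWmeas
    -- slices
    have claimA : ∀ u : ℝ, volume (Prod.mk u ⁻¹' S) = ∫⁻ l, F u l := by
      intro u
      rcases le_or_gt u 0 with hu | hu
      · have h1 : Prod.mk u ⁻¹' S = ∅ := by
          ext v
          simp only [hS, mem_preimage, mem_setOf_eq, mem_empty_iff_false, iff_false, not_and]
          exact fun h0 => absurd h0 (not_lt.mpr hu)
        have h2 : ∀ l, F u l = 0 := by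
          intro l
          apply indicator_of_notMem
          simp only [hW, mem_setOf_eq, not_and]
          exact fun h0 => absurd h0 (not_lt.mpr hu)
        simp only [h1, measure_empty, h2, lintegral_zero]
      · set T : Set ℝ := {l | u ^ (r+1) ≤ p l ∧ l ∈ s} with hT
        have hTmeas : MeasurableSet T :=
          (measurableSet_le measurable_const hmeas).inter hs
        have hne : (u ^ r) ≠ 0 := (Real.rpow_pos_of_pos hu r).ne'
        have h1 : Prod.mk u ⁻¹' S = (· * (u ^ r)⁻¹) ⁻¹' T := by
          ext v
          simp only [hS, hT, mem_preimage, mem_setOf_eq, hf, div_eq_mul_inv]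
          exact and_iff_right hu
        have h2 : ∀ l, F u l = T.indicator (fun _ => ENNReal.ofReal (u ^ r)) l := by
          intro l
          by_cases hl : l ∈ T
          · rw [indicator_of_mem hl]
            exact indicator_of_mem (show (u, l) ∈ W from ⟨hu, hl.1, hl.2⟩) _
          · rw [indicator_of_notMem hl]
            apply indicator_of_notMem
            simp only [hW, mem_setOf_eq, not_and]
            exact fun _ h2 h3 => hl ⟨h2, h3⟩
        rw [h1, Real.volume_preimage_mul_right (inv_ne_zero hne)]
        simp only [h2]
        rw [lintegral_indicator_const hTmeas]
        congr 2
        rw [inv_inv, abs_of_pos (Real.rpow_pos_of_pos hu r)]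
    have claimB : ∀ l : ℝ,
        ∫⁻ u, F u l = s.indicator (fun l => ENNReal.ofReal (p l / (r+1))) l := by
      intro l
      by_cases hl : l ∈ s
      · rw [indicator_of_mem hl]
        set c : ℝ := (p l) ^ (r+1)⁻¹ with hc
        have hcnn : 0 ≤ c := Real.rpow_nonneg (hpnn l) _
        have h1 : ∀ u : ℝ, F u l = (Ioc 0 c).indicator (fun u => ENNReal.ofReal (u ^ r)) u := by
          intro u
          by_cases hu : u ∈ Ioc 0 c
          · rw [indicator_of_mem hu]
            exact indicator_of_mem (show (u, l) ∈ W from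
              ⟨hu.1, (Real.le_rpow_inv_iff_of_pos hu.1.le (hpnn l) hr1).mp hu.2, hl⟩) _
          · rw [indicator_of_notMem hu]
            apply indicator_of_notMem
            simp only [hW, mem_setOf_eq, not_and]
            intro h0 h2 _
            exact hu ⟨h0, (Real.le_rpow_inv_iff_of_pos h0.le (hpnn l) hr1).mpr h2⟩
        simp only [h1]
        rw [lintegral_indicator measurableSet_Ioc, aux_inner19 r hr c hcnn,
          Real.rpow_inv_rpow (hpnn l) hr1.ne']
      · rw [indicator_of_notMem hl]
        have h1 : ∀ u : ℝ, F u l = 0 := by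
          intro u
          apply indicator_of_notMem
          simp only [hW, mem_setOf_eq, not_and]
          exact fun _ _ => hl
        simp only [h1, lintegral_zero]
    have hFmeas : Measurable (Function.uncurry F) :=
      hgmeas.indicator hWmeas
    rw [hset, Measure.volume_eq_prod, Measure.prod_apply hSmeas]
    calc ∫⁻ u, volume (Prod.mk u ⁻¹' S)
        = ∫⁻ u, ∫⁻ l, F u l := lintegral_congr claimA
      _ = ∫⁻ l, ∫⁻ u, F u l := lintegral_lintegral_swap hFmeas.aemeasurable
      _ = ∫⁻ l, s.indicator (fun l => ENNReal.ofReal (p l / (r+1))) l := lintegral_congr claimB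
      _ = ∫⁻ l in s, ENNReal.ofReal (p l / (r+1)) := lintegral_indicator hs _
      _ = ∫⁻ l in s, ENNReal.ofReal (1/(r+1)) * ENNReal.ofReal (p l) := by
          congr 1; ext l
          rw [← ENNReal.ofReal_mul (by positivity)]
          congr 1; field_simp
      _ = ENNReal.ofReal (1/(r+1)) * ∫⁻ l in s, ENNReal.ofReal (p l) :=
          lintegral_const_mul _ (ENNReal.measurable_ofReal.comp hmeas)
  -- total integral
  have hIu : ∫⁻ l, ENNReal.ofReal (p l) = ENNReal.ofReal I := by
    rw [← lintegral_add_compl (fun l => ENNReal.ofReal (p l)) measurableSet_Ioi (μ := volume)]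
    have h2 : ∫⁻ l in (Ioi (0:ℝ))ᶜ, ENNReal.ofReal (p l) = 0 := by
      calc ∫⁻ l in (Ioi (0:ℝ))ᶜ, ENNReal.ofReal (p l)
          = ∫⁻ _ in (Ioi (0:ℝ))ᶜ, 0 := by
            apply setLIntegral_congr_fun measurableSet_Ioi.compl
            intro l hl
            simp only [hzero l (by simpa using hl), ENNReal.ofReal_zero]
        _ = 0 := lintegral_zero
    have h3 : ∫⁻ l in Ioi (0:ℝ), ENNReal.ofReal (p l) = ENNReal.ofReal I :=
      (ofReal_integral_eq_lintegral_ofReal hint (ae_of_all _ hpnn)).symm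
    rw [h2, h3, add_zero]
  have hvolC : volume C = ENNReal.ofReal (I / (r+1)) := by
    have h := key univ MeasurableSet.univ
    simp only [preimage_univ, univ_inter, Measure.restrict_univ] at h
    rw [h, hIu, ← ENNReal.ofReal_mul (by positivity)]
    congr 1; field_simp
  have hIpos : 0 < I := by
    by_contra h
    push_neg at h
    have : volume C = 0 := by
      rw [hvolC, ENNReal.ofReal_eq_zero]
      exact div_nonpos_of_nonpos_of_nonneg h hr1.le
    exact absurd this hposC.ne'
  refine Measure.ext fun s hs => ?_
  rw [Measure.map_apply hfmeas hs, Measure.smul_apply, Measure.restrict_apply (hfmeas hs),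
    key s hs, withDensity_apply _ hs, smul_eq_mul, hvolC]
  have hrhs : ∫⁻ l in s, ENNReal.ofReal (p l / I)
      = ENNReal.ofReal (1/I) * ∫⁻ l in s, ENNReal.ofReal (p l) := by
    calc ∫⁻ l in s, ENNReal.ofReal (p l / I)
        = ∫⁻ l in s, ENNReal.ofReal (1/I) * ENNReal.ofReal (p l) := by
          congr 1; ext l
          rw [← ENNReal.ofReal_mul (by positivity)]
          congr 1; field_simp
      _ = ENNReal.ofReal (1/I) * ∫⁻ l in s, ENNReal.ofReal (p l) :=
          lintegral_const_mul _ (ENNReal.measurable_ofReal.comp hmeas)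
  rw [hrhs, ← mul_assoc]
  congr 1
  rw [← ENNReal.ofReal_inv_of_pos (div_pos hIpos hr1), inv_div,
    ← ENNReal.ofReal_mul (by positivity)]
  congr 1
  field_simp
end
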